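/- Let q : ℝ³ → ℝ³ be q(x) = (2x₂², x₂² − x₃, x₂² + x₃) and 𝒬₃ = { (s₀,s₁,s₂) : s₀ ≥ √(s₁² + s₂²) } the second-order cone. Let Γ = { x : q(x) ∈ 𝒬₃ } = { x : x₂² ≥ |x₃| }. Then the mapping x ↦ q(x) − 𝒬₃ is metrically subregular at x̄ = 0 for 0: there exists κ > 0 (one may take κ = √2) such that d(x, Γ) ≤ κ · d(q(x), 𝒬₃) for all x ∈ ℝ³. -/

import Mathlib

/-! Since `(x₂² - x₃)² + (x₂² + x₃)² = 2x₂⁴ + 2x₃²`, the cone condition on `q(x)` reads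
`x₃² ≤ x₂⁴`. Off `Γ`, moving `x₃` to `sign(x₃)·x₂²` shows `d(x, Γ) ≤ |x₃| - x₂²`. Conversely,
every `s ∈ 𝒬₃` has `s₁, s₂ ≤ s₀`, so `|x₃| - x₂²` is bounded by the sum of two coordinate gaps
between `q(x)` and `s`, which is at most `√2 · dist(q(x), s)`. Hence `κ = √2` works. -/

/-- The constraint map `q(x) = (2x₂², x₂² - x₃, x₂² + x₃)` of Example 4.4. -/
noncomputable def qMap : EuclideanSpace ℝ (Fin 3) → EuclideanSpace ℝ (Fin 3) :=
  fun x => WithLp.toLp 2 ![2 * (x 1) ^ 2, (x 1) ^ 2 - x 2, (x 1) ^ 2 + x 2]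

/-- The second-order cone `𝒬₃ ⊆ ℝ³`. -/
def socQ3 : Set (EuclideanSpace ℝ (Fin 3)) :=
  {s | Real.sqrt ((s 1) ^ 2 + (s 2) ^ 2) ≤ s 0}

open Metric

lemma abs_sub_add_abs_sub_le_sqrt_two_mul_dist {ι : Type*} [Fintype ι] (p s : EuclideanSpace ℝ ι)
    {i j : ι} (hij : i ≠ j) : |p i - s i| + |p j - s j| ≤ √2 * dist p s := by
  classical
  have hpair : (p i - s i) ^ 2 + (p j - s j) ^ 2 ≤ dist p s ^ 2 := by
    rw [EuclideanSpace.dist_eq, Real.sq_sqrt (by positivity), ← Finset.sum_pair hij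
      (f := fun k => (p k - s k) ^ 2)]
    simp only [Real.dist_eq, sq_abs]
    exact Finset.sum_le_sum_of_subset_of_nonneg (Finset.subset_univ _) fun _ _ _ => sq_nonneg _
  rw [← Real.sqrt_sq (by positivity : 0 ≤ |p i - s i| + |p j - s j|),
    ← Real.sqrt_sq dist_nonneg, ← Real.sqrt_mul zero_le_two]
  gcongr
  nlinarith [sq_nonneg (|p i - s i| - |p j - s j|), sq_abs (p i - s i), sq_abs (p j - s j)]

lemma sqrt_sub_sq_add_add_sq_le_two_mul_iff {a t : ℝ} (ha : 0 ≤ a) :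
    √((a - t) ^ 2 + (a + t) ^ 2) ≤ 2 * a ↔ |t| ≤ a := by
  rw [Real.sqrt_le_iff, ← abs_of_nonneg ha, ← sq_le_sq, abs_of_nonneg ha]
  constructor
  · rintro ⟨-, h⟩
    nlinarith
  · intro h
    exact ⟨by positivity, by nlinarith⟩

lemma exists_abs_eq_abs_sub_eq {a t : ℝ} (ha : 0 ≤ a) (h : a ≤ |t|) :
    ∃ c, |c| = a ∧ |t - c| = |t| - a := by
  rcases le_total 0 t with ht | ht
  · rw [abs_of_nonneg ht] at h ⊢
    exact ⟨a, abs_of_nonneg ha, abs_of_nonneg (by linarith)⟩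
  · rw [abs_of_nonpos ht] at h ⊢
    exact ⟨-a, by rw [abs_neg, abs_of_nonneg ha], by rw [abs_of_nonpos (by linarith)]; ring⟩

section qMap

variable (x : EuclideanSpace ℝ (Fin 3))

@[simp] lemma qMap_apply_zero : qMap x 0 = 2 * x 1 ^ 2 := rfl
@[simp] lemma qMap_apply_one : qMap x 1 = x 1 ^ 2 - x 2 := rfl
@[simp] lemma qMap_apply_two : qMap x 2 = x 1 ^ 2 + x 2 := rfl

lemma qMap_mem_socQ3_iff : qMap x ∈ socQ3 ↔ |x 2| ≤ x 1 ^ 2 := by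
  simpa [socQ3, sub_eq_add_neg, ← neg_sq (x 2)] using
    sqrt_sub_sq_add_add_sq_le_two_mul_iff (t := x 2) (sq_nonneg (x 1))

lemma setOf_qMap_mem_socQ3 :
    {x : EuclideanSpace ℝ (Fin 3) | qMap x ∈ socQ3} = {x | |x 2| ≤ x 1 ^ 2} :=
  Set.ext qMap_mem_socQ3_iff

end qMap

lemma apply_le_apply_zero_of_mem_socQ3 {s : EuclideanSpace ℝ (Fin 3)} (hs : s ∈ socQ3)
    (i : Fin 3) : s i ≤ s 0 := by
  have hs' : √(s 1 ^ 2 + s 2 ^ 2) ≤ s 0 := hs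
  fin_cases i
  · exact le_rfl
  · exact (Real.le_sqrt_of_sq_le (le_add_of_nonneg_right (sq_nonneg (s 2)))).trans hs'
  · exact (Real.le_sqrt_of_sq_le (le_add_of_nonneg_left (sq_nonneg (s 1)))).trans hs'

lemma infDist_le_abs_sub_sq {x : EuclideanSpace ℝ (Fin 3)} (h : x 1 ^ 2 ≤ |x 2|) :
    infDist x {y : EuclideanSpace ℝ (Fin 3) | |y 2| ≤ y 1 ^ 2} ≤ |x 2| - x 1 ^ 2 := by
  obtain ⟨c, hc, hxc⟩ := exists_abs_eq_abs_sub_eq (sq_nonneg (x 1)) h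
  calc infDist x _ ≤ dist x (WithLp.toLp 2 ![x 0, x 1, c]) :=
        infDist_le_dist_of_mem (by simp [hc])
    _ = |x 2 - c| := by
        simp [EuclideanSpace.dist_eq, Fin.sum_univ_three, Real.dist_eq, Real.sqrt_sq_eq_abs]
    _ = |x 2| - x 1 ^ 2 := hxc

lemma abs_sub_sq_le_sqrt_two_mul_infDist_qMap (x : EuclideanSpace ℝ (Fin 3)) :
    |x 2| - x 1 ^ 2 ≤ √2 * infDist (qMap x) socQ3 := by
  rw [← div_le_iff₀' (by positivity), le_infDist ⟨0, by simp [socQ3]⟩]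
  intro s hs
  rw [div_le_iff₀' (by positivity)]
  have hs1 := apply_le_apply_zero_of_mem_socQ3 hs 1
  have hs2 := apply_le_apply_zero_of_mem_socQ3 hs 2
  have hgap0 := neg_abs_le (qMap x 0 - s 0)
  rcases le_total 0 (x 2) with ht | ht
  · calc |x 2| - x 1 ^ 2 ≤ |qMap x 0 - s 0| + |qMap x 2 - s 2| := by
          rw [abs_of_nonneg ht]
          linarith [le_abs_self (qMap x 2 - s 2), qMap_apply_zero x, qMap_apply_two x]
      _ ≤ _ := abs_sub_add_abs_sub_le_sqrt_two_mul_dist _ _ (by decide)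
  · calc |x 2| - x 1 ^ 2 ≤ |qMap x 0 - s 0| + |qMap x 1 - s 1| := by
          rw [abs_of_nonpos ht]
          linarith [le_abs_self (qMap x 1 - s 1), qMap_apply_zero x, qMap_apply_one x]
      _ ≤ _ := abs_sub_add_abs_sub_le_sqrt_two_mul_dist _ _ (by decide)

/-- The feasible set `Γ = {x : q(x) ∈ 𝒬₃}` equals `{x : x₂² ≥ |x₃|}`, and the map
`x ↦ q(x) - 𝒬₃` is metrically subregular at `0` for `0`:
`d(x, Γ) ≤ κ d(q(x), 𝒬₃)` for all `x`. -/
theorem stmt14 :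
    {x : EuclideanSpace ℝ (Fin 3) | qMap x ∈ socQ3} =
      {x : EuclideanSpace ℝ (Fin 3) | |x 2| ≤ (x 1) ^ 2} ∧
    ∃ κ > (0 : ℝ), ∀ x : EuclideanSpace ℝ (Fin 3),
      Metric.infDist x {x : EuclideanSpace ℝ (Fin 3) | qMap x ∈ socQ3} ≤
        κ * Metric.infDist (qMap x) socQ3 := by
  refine ⟨setOf_qMap_mem_socQ3, √2, by positivity, fun x => ?_⟩
  rw [setOf_qMap_mem_socQ3]
  by_cases hx : |x 2| ≤ x 1 ^ 2
  · have hx' : x ∈ {y : EuclideanSpace ℝ (Fin 3) | |y 2| ≤ y 1 ^ 2} := hx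
    rw [infDist_zero_of_mem hx']
    exact mul_nonneg (Real.sqrt_nonneg 2) infDist_nonneg
  · calc infDist x _ ≤ |x 2| - x 1 ^ 2 := infDist_le_abs_sub_sq (not_le.1 hx).le
      _ ≤ √2 * infDist (qMap x) socQ3 := abs_sub_sq_le_sqrt_two_mul_infDist_qMap x
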